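/- Consider one inner loop of SARAH (SARAH-IN) with each f_i L-smooth, inner loop size m = n − 1, and learning rate η = 2 / ( L ( sqrt(4(n/b) − 3) + 1 ) ). If the output w̃ equals w_t with t chosen uniformly at random from {0,1,...,n−1}, then E[||∇P(w̃)||²] ≤ ( L ( sqrt(4(n/b) − 3) + 1 ) / n ) · [P(w_0) − P(w_*)], where w_* is a global minimizer of P. -/

import Mathlib

open scoped BigOperators

noncomputable section

/-- Vectors in `ℝ^d`. -/
abbrev Vec (d : ℕ) := EuclideanSpace ℝ (Fin d)

/-- The type of mini-batches of size `b` from `{1,…,n}` (modeled as `Fin n`). -/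
def Batch (n b : ℕ) : Type := {s : Finset (Fin n) // s.card = b}

instance (n b : ℕ) : Fintype (Batch n b) :=
  inferInstanceAs (Fintype {s : Finset (Fin n) // s.card = b})

/-- Expectation (uniform average) over a finite sample space. -/
def expec {Ω : Type*} [Fintype Ω] (F : Ω → ℝ) : ℝ :=
  (Fintype.card Ω : ℝ)⁻¹ * ∑ ω, F ω

/-- The SARAH-IN state `(w_t, v_t)` given a starting point `w0`, a learning rate `η`,
a batch size `b` and a sequence of mini-batches `I` (where `I t` is the batch used to
form `v_t`, for `t ≥ 1`). -/
def sarahState {d n : ℕ} (f : Fin n → Vec d → ℝ) (w0 : Vec d) (η : ℝ) (b : ℕ)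
    (I : ℕ → Finset (Fin n)) : ℕ → Vec d × Vec d
  | 0 => (w0, (n : ℝ)⁻¹ • ∑ i, gradient (f i) w0)
  | t + 1 =>
    let p := sarahState f w0 η b I t
    let w' := p.1 - η • p.2
    (w', (b : ℝ)⁻¹ • ∑ i ∈ I (t + 1), (gradient (f i) w' - gradient (f i) p.1) + p.2)

/-- Extend a finite sequence of mini-batches to all of `ℕ` (indices `≥ T` are irrelevant). -/
def pad {n b T : ℕ} (ω : Fin T → Batch n b) : ℕ → Finset (Fin n) :=
  fun t => if h : t < T then (ω ⟨t, h⟩).1 else ∅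

/-!
Smoothness of `P` gives the one-step descent
`P w_{t+1} ≤ P w_t - η/2 ‖∇P w_t‖² - η/2 (1 - Lη) ‖v_t‖² + η/2 ‖∇P w_t - v_t‖²`.
The batch `I_{t+1}` is independent of `w_t, v_t, w_{t+1}`, and the correction it adds to `v_t`
is the batch mean of `δ_i = ∇f_i w_{t+1} - ∇f_i w_t`. Sampling `b` of `n` indices without
replacement, this mean is unbiased with variance `(n - b)/(b (n - 1))` times the population
variance of the `δ_i`, which is at most `(Lη ‖v_t‖)²`. So the estimator error
`E‖∇P w_t - v_t‖²` grows by at most `(n - b)/(b (n - 1)) (Lη)² E‖v_t‖²` per step. Over the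
iterates `w_0, …, w_{n-1}` the accumulated errors are absorbed by the `-(1 - Lη) ‖v_t‖²` terms
because `(n/b - 1)(Lη)² = 1 - Lη` for the chosen `η`, and telescoping leaves
`η/2 Σ_{t<n} E‖∇P w_t‖² ≤ P w_0 - P w_*`.
-/

open Finset Function
open scoped RealInnerProductSpace

section Expectation

variable {Ω : Type*} [Fintype Ω]

lemma expec_add (X Y : Ω → ℝ) : expec (fun ω => X ω + Y ω) = expec X + expec Y := by
  simp only [expec, sum_add_distrib, mul_add]

lemma expec_sub (X Y : Ω → ℝ) : expec (fun ω => X ω - Y ω) = expec X - expec Y := by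
  simp only [expec, sum_sub_distrib, mul_sub]

lemma expec_const_mul (c : ℝ) (X : Ω → ℝ) : expec (fun ω => c * X ω) = c * expec X := by
  simp only [expec, ← mul_sum]
  ring

lemma expec_const [Nonempty Ω] (c : ℝ) : expec (fun _ : Ω => c) = c := by
  simp [expec]

lemma expec_mono {X Y : Ω → ℝ} (h : ∀ ω, X ω ≤ Y ω) : expec X ≤ expec Y :=
  mul_le_mul_of_nonneg_left (sum_le_sum fun ω _ => h ω) (by positivity)

lemma expec_nonneg {X : Ω → ℝ} (h : ∀ ω, 0 ≤ X ω) : 0 ≤ expec X :=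
  mul_nonneg (by positivity) (sum_nonneg fun ω _ => h ω)

lemma expec_prod_fin {n : ℕ} (X : Ω → ℕ → ℝ) :
    expec (fun p : Ω × Fin n => X p.1 p.2) = (n : ℝ)⁻¹ * ∑ t ∈ range n, expec (X · t) := by
  simp only [expec, Fintype.card_prod, Fintype.card_fin, Fintype.sum_prod_type, Nat.cast_mul,
    mul_inv, mul_sum]
  rw [sum_comm, ← Fin.sum_univ_eq_sum_range
    (fun t => ∑ ω, (n : ℝ)⁻¹ * ((Fintype.card Ω : ℝ)⁻¹ * X ω t))]
  ring_nf

lemma expec_eval_eq_expec_expec {ι κ : Type*} [Fintype ι] [DecidableEq ι] [Fintype κ] (j : ι)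
    (X : (ι → κ) → κ → ℝ) (hX : ∀ ω s s', X (update ω j s') s = X ω s) :
    expec (fun ω => X ω (ω j)) = expec (fun ω => expec (X ω)) := by
  rcases isEmpty_or_nonempty κ with hκ | hκ
  · have : IsEmpty (ι → κ) := ⟨fun ω => hκ.elim (ω j)⟩
    simp [expec]
  have hswap : ∑ p : (ι → κ) × κ, X p.1 p.2 = ∑ p : (ι → κ) × κ, X p.1 (p.1 j) := by
    refine Fintype.sum_bijective (fun p => (update p.1 j p.2, p.1 j)) (Involutive.bijective ?_)
      _ _ fun p => by simp [hX]
    intro p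
    simp
  rw [Fintype.sum_prod_type, Fintype.sum_prod_type] at hswap
  simp only [sum_const, card_univ, nsmul_eq_mul] at hswap
  simp only [expec, ← mul_sum, hswap]
  field_simp

namespace Batch

variable {n b : ℕ}

lemma nonempty_of_le (hbn : b ≤ n) : Nonempty (Batch n b) := by
  obtain ⟨s, -, hs⟩ := exists_subset_card_eq (s := (univ : Finset (Fin n))) (by simpa using hbn)
  exact ⟨⟨s, hs⟩⟩

variable (b) in
def numContaining (T : Finset (Fin n)) : ℕ := #{s : Batch n b | T ⊆ s.1}

lemma numContaining_image_perm (σ : Equiv.Perm (Fin n)) (T : Finset (Fin n)) :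
    numContaining b (T.image σ) = numContaining b T := by
  refine card_bij'
    (fun s _ => (⟨s.1.image σ.symm, by rw [card_image_of_injective _ σ.symm.injective, s.2]⟩ :
      Batch n b))
    (fun s _ => (⟨s.1.image σ, by rw [card_image_of_injective _ σ.injective, s.2]⟩ : Batch n b))
    ?_ ?_ ?_ ?_
  · intro s hs
    refine mem_filter.2 ⟨mem_univ _, ?_⟩
    simpa [image_image] using image_subset_image (f := σ.symm) (mem_filter.1 hs).2
  · exact fun s hs => mem_filter.2 ⟨mem_univ _, image_subset_image (mem_filter.1 hs).2⟩
  · exact fun s _ => Subtype.ext (by simp [image_image])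
  · exact fun s _ => Subtype.ext (by simp [image_image])

lemma numContaining_singleton (i j : Fin n) : numContaining b {i} = numContaining b {j} := by
  simpa using (numContaining_image_perm (b := b) (Equiv.swap i j) {i}).symm

lemma numContaining_pair {i j i' j' : Fin n} (hij : i ≠ j) (hij' : i' ≠ j') :
    numContaining b {i, j} = numContaining b {i', j'} := by
  -- `swap a j' * swap i i'` sends `i ↦ i'` and `j ↦ j'`
  set a := Equiv.swap i i' j
  have hai : a ≠ i' := by
    simpa [a, Equiv.swap_apply_eq_iff, Equiv.swap_apply_left] using hij.symm
  have h := numContaining_image_perm (b := b) (Equiv.swap a j' * Equiv.swap i i') {i, j}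
  rw [image_insert, image_singleton, Equiv.Perm.mul_apply, Equiv.Perm.mul_apply,
    Equiv.swap_apply_left, Equiv.swap_apply_of_ne_of_ne hai.symm hij', Equiv.swap_apply_left] at h
  exact h.symm

lemma sum_sum_mem {M : Type*} [AddCommMonoid M] (y : Fin n → M) :
    ∑ s : Batch n b, ∑ i ∈ s.1, y i = ∑ i, numContaining b {i} • y i := by
  rw [sum_comm' (t' := univ) (s' := fun i => {s : Batch n b | {i} ⊆ s.1}) (by simp)]
  simp only [sum_const, numContaining]

lemma sum_sum_mem_sum_mem {M : Type*} [AddCommMonoid M] (y : Fin n → Fin n → M) :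
    ∑ s : Batch n b, ∑ i ∈ s.1, ∑ j ∈ s.1, y i j
      = ∑ i, ∑ j, numContaining b {i, j} • y i j := by
  rw [sum_comm' (t' := univ) (s' := fun i => {s : Batch n b | i ∈ s.1}) (by simp)]
  refine sum_congr rfl fun i _ => ?_
  rw [sum_comm' (t' := univ) (s' := fun j => {s : Batch n b | {i, j} ⊆ s.1})
    (by simp [insert_subset_iff, and_comm])]
  simp only [sum_const, numContaining]

lemma card_mul_eq_mul_numContaining (i : Fin n) :
    Fintype.card (Batch n b) * b = n * numContaining b {i} := by
  have h := sum_sum_mem (b := b) (fun _ : Fin n => 1)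
  simp only [sum_const, smul_eq_mul, mul_one] at h
  rwa [sum_const_nat fun s _ => s.2, sum_const_nat fun j _ => numContaining_singleton j i,
    card_univ, card_univ, Fintype.card_fin] at h

lemma sum_numContaining_pair (i : Fin n) :
    ∑ j, numContaining b {i, j} = numContaining b {i} * b := by
  have h := sum_comm' (s := ({s : Batch n b | {i} ⊆ s.1} : Finset _)) (t := fun s => s.1)
    (t' := univ) (s' := fun j => {s : Batch n b | {i, j} ⊆ s.1}) (f := fun _ _ => 1)
    (by simp [insert_subset_iff])
  simp only [sum_const, smul_eq_mul, mul_one] at h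
  rw [numContaining, ← sum_const_nat fun s _ => s.2, h]
  rfl

lemma numContaining_add_mul_numContaining_pair {i j : Fin n} (hij : i ≠ j) :
    numContaining b {i} + (n - 1) * numContaining b {i, j} = numContaining b {i} * b := by
  rw [← sum_numContaining_pair i, ← add_sum_erase _ _ (mem_univ i), pair_eq_singleton,
    sum_congr rfl fun k hk => numContaining_pair (ne_of_mem_erase hk).symm hij, sum_const,
    card_erase_of_mem (mem_univ i), card_univ, Fintype.card_fin, smul_eq_mul]

lemma sum_sum_mem_eq_zero {M : Type*} [AddCommGroup M] {y : Fin n → M} (hy : ∑ i, y i = 0) :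
    ∑ s : Batch n b, ∑ i ∈ s.1, y i = 0 := by
  rw [sum_sum_mem]
  cases n with
  | zero => simp
  | succ n =>
    rw [sum_congr rfl fun i _ => by rw [numContaining_singleton i 0], ← smul_sum, hy, smul_zero]

variable {F : Type*} [NormedAddCommGroup F] [InnerProductSpace ℝ F]

lemma smul_sum_mem_sub (s : Batch n b) (hb : b ≠ 0) (δ : Fin n → F) (μ : F) :
    (b : ℝ)⁻¹ • ∑ i ∈ s.1, (δ i - μ) = (b : ℝ)⁻¹ • ∑ i ∈ s.1, δ i - μ := by
  rw [sum_sub_distrib, sum_const, s.2, smul_sub, ← Nat.cast_smul_eq_nsmul ℝ, smul_smul,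
    inv_mul_cancel₀ (Nat.cast_ne_zero.2 hb), one_smul]

lemma sum_norm_sq_sum_mem (y : Fin n → F) :
    ∑ s : Batch n b, ‖∑ i ∈ s.1, y i‖ ^ 2
      = ∑ i, ∑ j, (numContaining b {i, j} : ℝ) * ⟪y i, y j⟫ := by
  simp only [← real_inner_self_eq_norm_sq, sum_inner]
  simp only [inner_sum]
  rw [sum_sum_mem_sum_mem]
  simp only [nsmul_eq_mul]

lemma sum_norm_sq_sum_mem_of_sum_eq_zero {i₀ j₀ : Fin n} (hij : i₀ ≠ j₀) {y : Fin n → F}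
    (hy : ∑ i, y i = 0) :
    ∑ s : Batch n b, ‖∑ i ∈ s.1, y i‖ ^ 2
      = (numContaining b {i₀} - numContaining b {i₀, j₀} : ℝ) * ∑ i, ‖y i‖ ^ 2 := by
  set α : ℝ := (numContaining b {i₀} : ℝ)
  set β : ℝ := (numContaining b {i₀, j₀} : ℝ)
  have hN : ∀ i j : Fin n,
      (numContaining b {i, j} : ℝ) = β + (α - β) * if i = j then 1 else 0 := by
    intro i j
    split_ifs with h
    · rw [h, pair_eq_singleton, numContaining_singleton j i₀]
      ring
    · rw [numContaining_pair h hij]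
      ring
  calc ∑ s : Batch n b, ‖∑ i ∈ s.1, y i‖ ^ 2
      = ∑ i, ∑ j, (β * ⟪y i, y j⟫ + (α - β) * if i = j then ⟪y i, y j⟫ else 0) := by
        rw [sum_norm_sq_sum_mem]
        refine sum_congr rfl fun i _ => sum_congr rfl fun j _ => ?_
        rw [hN]
        split_ifs <;> ring
    _ = β * ∑ i, ∑ j, ⟪y i, y j⟫ + (α - β) * ∑ i, ‖y i‖ ^ 2 := by
        simp only [sum_add_distrib, ← mul_sum, sum_ite_eq, mem_univ, if_true,
          real_inner_self_eq_norm_sq]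
    _ = (α - β) * ∑ i, ‖y i‖ ^ 2 := by
        simp only [← inner_sum, ← sum_inner, hy, inner_zero_left, mul_zero, zero_add]

lemma expec_norm_sq_smul_sum_mem (hn : 2 ≤ n) (hbn : b ≤ n) {y : Fin n → F}
    (hy : ∑ i, y i = 0) :
    expec (fun s : Batch n b => ‖(b : ℝ)⁻¹ • ∑ i ∈ s.1, y i‖ ^ 2)
      = (n - b) / (b * (n - 1)) * ((n : ℝ)⁻¹ * ∑ i, ‖y i‖ ^ 2) := by
  set i₀ : Fin n := ⟨0, by omega⟩
  set j₀ : Fin n := ⟨1, by omega⟩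
  have hij : i₀ ≠ j₀ := by simp [Fin.ext_iff, i₀, j₀]
  have hC : (Fintype.card (Batch n b) : ℝ) ≠ 0 := by
    have := nonempty_of_le hbn
    exact Nat.cast_ne_zero.2 Fintype.card_ne_zero
  have hA : (Fintype.card (Batch n b) * b : ℝ) = n * numContaining b {i₀} := by
    exact_mod_cast card_mul_eq_mul_numContaining i₀
  have hB := congrArg (Nat.cast (R := ℝ)) (numContaining_add_mul_numContaining_pair (b := b) hij)
  push_cast [Nat.cast_sub (show 1 ≤ n by omega)] at hB
  have hn1 : (n : ℝ) - 1 ≠ 0 := by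
    have : (2 : ℝ) ≤ n := by exact_mod_cast hn
    linarith
  simp only [expec, norm_smul, mul_pow, ← mul_sum, sum_norm_sq_sum_mem_of_sum_eq_zero hij hy,
    norm_inv, Real.norm_natCast]
  rcases Nat.eq_zero_or_pos b with rfl | hb
  · simp
  have hn0 : (n : ℝ) ≠ 0 := by positivity
  field_simp
  linear_combination (∑ i, ‖y i‖ ^ 2) * ((b - n) * hA - n * hB)

lemma expec_norm_sub_smul_sum_mem_sq (hn : 2 ≤ n) (hbn : b ≤ n) (e : F) {y : Fin n → F}
    (hy : ∑ i, y i = 0) :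
    expec (fun s : Batch n b => ‖e - (b : ℝ)⁻¹ • ∑ i ∈ s.1, y i‖ ^ 2)
      = ‖e‖ ^ 2 + (n - b) / (b * (n - 1)) * ((n : ℝ)⁻¹ * ∑ i, ‖y i‖ ^ 2) := by
  have := nonempty_of_le hbn
  have hcross : expec (fun s : Batch n b => 2 * ⟪e, (b : ℝ)⁻¹ • ∑ i ∈ s.1, y i⟫) = 0 := by
    simp only [expec, ← mul_sum, ← inner_sum, ← smul_sum, sum_sum_mem_eq_zero hy, smul_zero,
      inner_zero_right, mul_zero]
  simp only [norm_sub_sq_real]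
  rw [expec_add, expec_sub, expec_const, hcross, expec_norm_sq_smul_sum_mem hn hbn hy, sub_zero]

end Batch

section Smoothness

variable {F : Type*} [NormedAddCommGroup F] [InnerProductSpace ℝ F]

lemma sum_norm_sub_mean_sq_le {n : ℕ} (δ : Fin n → F) :
    ∑ i, ‖δ i - (n : ℝ)⁻¹ • ∑ j, δ j‖ ^ 2 ≤ ∑ i, ‖δ i‖ ^ 2 := by
  rcases Nat.eq_zero_or_pos n with rfl | hn
  · simp
  set μ := (n : ℝ)⁻¹ • ∑ j, δ j
  have hsum : ∑ j, δ j = (n : ℝ) • μ := by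
    rw [smul_smul, mul_inv_cancel₀ (by positivity), one_smul]
  have h : ∑ i, ‖δ i - μ‖ ^ 2 = ∑ i, ‖δ i‖ ^ 2 - n * ‖μ‖ ^ 2 := by
    simp only [norm_sub_sq_real, sum_add_distrib, sum_sub_distrib, ← mul_sum, ← sum_inner, hsum,
      real_inner_smul_left, real_inner_self_eq_norm_sq, sum_const, card_univ, Fintype.card_fin,
      nsmul_eq_mul]
    ring
  rw [h]
  nlinarith [sq_nonneg ‖μ‖]

lemma sum_sub_mean_eq_zero {n : ℕ} (hn : n ≠ 0) (δ : Fin n → F) :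
    ∑ i, (δ i - (n : ℝ)⁻¹ • ∑ j, δ j) = 0 := by
  rw [sum_sub_distrib, sum_const, card_univ, Fintype.card_fin, ← Nat.cast_smul_eq_nsmul ℝ,
    smul_smul, mul_inv_cancel₀ (Nat.cast_ne_zero.2 hn), one_smul, sub_self]

lemma inv_mul_sum_norm_sub_mean_sq_le {n : ℕ} {δ : Fin n → F} {c : ℝ}
    (hδ : ∀ i, ‖δ i‖ ≤ c) :
    (n : ℝ)⁻¹ * ∑ i, ‖δ i - (n : ℝ)⁻¹ • ∑ j, δ j‖ ^ 2 ≤ c ^ 2 := by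
  rcases Nat.eq_zero_or_pos n with rfl | hn
  · simp [sq_nonneg]
  calc (n : ℝ)⁻¹ * ∑ i, ‖δ i - (n : ℝ)⁻¹ • ∑ j, δ j‖ ^ 2
      ≤ (n : ℝ)⁻¹ * ∑ _i : Fin n, c ^ 2 := by
        refine mul_le_mul_of_nonneg_left ((sum_norm_sub_mean_sq_le δ).trans
          (sum_le_sum fun i _ => pow_le_pow_left₀ (norm_nonneg _) (hδ i) 2)) (by positivity)
    _ = c ^ 2 := by
        rw [sum_const, card_univ, Fintype.card_fin, nsmul_eq_mul,
          inv_mul_cancel_left₀ (by positivity)]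

variable [CompleteSpace F]

def meanGradient {n : ℕ} (f : Fin n → F → ℝ) (w : F) : F := (n : ℝ)⁻¹ • ∑ i, gradient (f i) w

lemma gradient_inv_mul_sum {n : ℕ} {f : Fin n → F → ℝ} (hf : ∀ i, Differentiable ℝ (f i)) :
    gradient (fun w => (n : ℝ)⁻¹ * ∑ i, f i w) = meanGradient f := by
  ext1 w
  have h : HasFDerivAt (fun w => (n : ℝ)⁻¹ * ∑ i, f i w)
      ((n : ℝ)⁻¹ • ∑ i, fderiv ℝ (f i) w) w :=
    (HasFDerivAt.fun_sum fun i _ => (hf i w).hasFDerivAt).const_mul _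
  simp only [gradient, meanGradient, h.fderiv, map_smul, map_sum]

lemma norm_meanGradient_sub_le {n : ℕ} (hn : n ≠ 0) {f : Fin n → F → ℝ} {L : ℝ}
    (hsmooth : ∀ i x y, ‖gradient (f i) x - gradient (f i) y‖ ≤ L * ‖x - y‖) (x y : F) :
    ‖meanGradient f x - meanGradient f y‖ ≤ L * ‖x - y‖ := by
  rw [meanGradient, meanGradient, ← smul_sub, ← sum_sub_distrib, norm_smul, norm_inv,
    Real.norm_natCast]
  calc (n : ℝ)⁻¹ * ‖∑ i, (gradient (f i) x - gradient (f i) y)‖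
      ≤ (n : ℝ)⁻¹ * ∑ _i : Fin n, L * ‖x - y‖ := by
        refine mul_le_mul_of_nonneg_left ((norm_sum_le _ _).trans
          (sum_le_sum fun i _ => hsmooth i x y)) (by positivity)
    _ = L * ‖x - y‖ := by
        rw [sum_const, card_univ, Fintype.card_fin, nsmul_eq_mul,
          inv_mul_cancel_left₀ (Nat.cast_ne_zero.2 hn)]

lemma le_add_inner_add_sq_of_lipschitz_gradient {P : F → ℝ} (hP : Differentiable ℝ P) {L : ℝ}
    (hlip : ∀ x y, ‖gradient P x - gradient P y‖ ≤ L * ‖x - y‖) (x y : F) :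
    P y ≤ P x + ⟪gradient P x, y - x⟫ + L / 2 * ‖y - x‖ ^ 2 := by
  set v := y - x
  set ψ : ℝ → ℝ := fun t => P (x + t • v) - t * ⟪gradient P x, v⟫ - L / 2 * t ^ 2 * ‖v‖ ^ 2
  have hψ : ∀ t : ℝ, HasDerivAt ψ
      (⟪gradient P (x + t • v) - gradient P x, v⟫ - L * t * ‖v‖ ^ 2) t := by
    intro t
    have hline : HasDerivAt (fun t : ℝ => x + t • v) v t := by
      simpa using ((hasDerivAt_id t).smul_const v).const_add x
    have hPt := ((hP (x + t • v)).hasGradientAt.hasFDerivAt).comp_hasDerivAt t hline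
    simp only [InnerProductSpace.toDual_apply_apply] at hPt
    refine ((hPt.sub ((hasDerivAt_id t).mul_const ⟪gradient P x, v⟫)).sub
      (((hasDerivAt_pow 2 t).const_mul (L / 2)).mul_const (‖v‖ ^ 2))).congr_deriv ?_
    rw [inner_sub_left, Nat.cast_ofNat, show 2 - 1 = 1 from rfl]
    ring
  -- Cauchy–Schwarz and the Lipschitz bound give `ψ' t ≤ L t ‖v‖² - L t ‖v‖² = 0` on `[0, 1]`
  have hanti : AntitoneOn ψ (Set.Icc 0 1) := by
    refine antitoneOn_of_deriv_nonpos (convex_Icc 0 1)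
      (fun t _ => (hψ t).continuousAt.continuousWithinAt)
      (fun t _ => (hψ t).differentiableAt.differentiableWithinAt) fun t ht => ?_
    rw [interior_Icc] at ht
    have hlipt := hlip (x + t • v) x
    rw [add_sub_cancel_left, norm_smul, Real.norm_of_nonneg ht.1.le] at hlipt
    rw [(hψ t).deriv]
    nlinarith [real_inner_le_norm (gradient P (x + t • v) - gradient P x) v, norm_nonneg v]
  have h := hanti (Set.left_mem_Icc.2 zero_le_one) (Set.right_mem_Icc.2 zero_le_one) zero_le_one
  have h0 : ψ 0 = P x := by simp [ψ]
  have h1 : ψ 1 = P y - ⟪gradient P x, y - x⟫ - L / 2 * ‖y - x‖ ^ 2 := by simp [ψ, v]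
  linarith

lemma apply_sub_smul_le {P : F → ℝ} (hP : Differentiable ℝ P) {L : ℝ}
    (hlip : ∀ x y, ‖gradient P x - gradient P y‖ ≤ L * ‖x - y‖) (η : ℝ) (x v : F) :
    P (x - η • v) ≤ P x - η / 2 * ‖gradient P x‖ ^ 2 - η / 2 * (1 - L * η) * ‖v‖ ^ 2
      + η / 2 * ‖gradient P x - v‖ ^ 2 := by
  have h := le_add_inner_add_sq_of_lipschitz_gradient hP hlip x (x - η • v)
  rw [sub_sub_cancel_left, norm_neg, norm_smul, inner_neg_right, real_inner_smul_right,
    mul_pow, Real.norm_eq_abs, sq_abs] at h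
  linear_combination h - η / 2 * norm_sub_sq_real (gradient P x) v

lemma expec_apply_sub_smul_le {Ω : Type*} [Fintype Ω] {P : F → ℝ} (hP : Differentiable ℝ P)
    {L : ℝ} (hlip : ∀ x y, ‖gradient P x - gradient P y‖ ≤ L * ‖x - y‖) (η : ℝ) (x v : Ω → F) :
    expec (fun ω => P (x ω - η • v ω))
      ≤ expec (fun ω => P (x ω)) - η / 2 * expec (fun ω => ‖gradient P (x ω)‖ ^ 2)
        - (1 - L * η) * (η / 2 * expec (fun ω => ‖v ω‖ ^ 2))
        + η / 2 * expec (fun ω => ‖gradient P (x ω) - v ω‖ ^ 2) := by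
  refine (expec_mono fun ω => apply_sub_smul_le hP hlip η (x ω) (v ω)).trans_eq ?_
  simp only [expec_add, expec_sub, expec_const_mul]
  ring

end Smoothness

section Recursions

variable {A B C p : ℕ → ℝ} {K c lo : ℝ} {m : ℕ}

lemma sum_range_le_of_succ_le (hK : 0 ≤ K) (hB : ∀ t, 0 ≤ B t) (hC0 : C 0 = 0)
    (hC : ∀ t, t + 1 < m → C (t + 1) ≤ C t + K * B t) :
    ∑ t ∈ range m, C t ≤ K * (m - 1) * ∑ t ∈ range m, B t := by
  have hCt : ∀ t < m, C t ≤ K * ∑ j ∈ range t, B j := by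
    intro t
    induction t with
    | zero => simp [hC0]
    | succ t ih =>
      intro ht
      rw [sum_range_succ, mul_add]
      linarith [hC t ht, ih (by omega)]
  obtain _ | m := m
  · simp
  have hBm : ∀ t ≤ m + 1, ∑ j ∈ range t, B j ≤ ∑ j ∈ range (m + 1), B j := fun t ht =>
    sum_le_sum_of_subset_of_nonneg (range_subset_range.2 ht) fun j _ _ => hB j
  calc ∑ t ∈ range (m + 1), C t
      = ∑ t ∈ range m, C (t + 1) := by rw [sum_range_succ', hC0, add_zero]
    _ ≤ ∑ _t ∈ range m, K * ∑ j ∈ range (m + 1), B j :=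
        sum_le_sum fun t ht => (hCt (t + 1) (by rw [mem_range] at ht; omega)).trans
          (mul_le_mul_of_nonneg_left (hBm (t + 1) (by rw [mem_range] at ht; omega)) hK)
    _ = K * ((m + 1 : ℕ) - 1) * ∑ t ∈ range (m + 1), B t := by
        rw [sum_const, card_range, nsmul_eq_mul]
        push_cast
        ring

lemma sum_range_le_of_descent (hdesc : ∀ t, p (t + 1) ≤ p t - A t - c * B t + C t)
    (hK : 0 ≤ K) (hB : ∀ t, 0 ≤ B t) (hC0 : C 0 = 0)
    (hC : ∀ t, t + 1 < m → C (t + 1) ≤ C t + K * B t) (hKc : K * (m - 1) ≤ c) (hlo : lo ≤ p m) :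
    ∑ t ∈ range m, A t ≤ p 0 - lo := by
  have htel : p m - p 0 ≤ ∑ t ∈ range m, (C t - A t - c * B t) := by
    rw [← sum_range_sub]
    exact sum_le_sum fun t _ => by linarith [hdesc t]
  have hCB := sum_range_le_of_succ_le hK hB hC0 hC
  have hKcB := mul_le_mul_of_nonneg_right hKc (sum_nonneg fun t (_ : t ∈ range m) => hB t)
  rw [sum_sub_distrib, sum_sub_distrib, ← mul_sum] at htel
  linarith

end Recursions

lemma sub_div_mul_sub_one_nonneg {n b : ℕ} (hn : 1 ≤ n) (hbn : b ≤ n) :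
    0 ≤ ((n : ℝ) - b) / (b * (n - 1)) := by
  have : (b : ℝ) ≤ n := by exact_mod_cast hbn
  have : (1 : ℝ) ≤ n := by exact_mod_cast hn
  exact div_nonneg (by linarith) (mul_nonneg (by positivity) (by linarith))

section Sarah

variable {d n b m : ℕ} (f : Fin n → Vec d → ℝ) (w0 : Vec d) (η : ℝ)

def sarahIterate (ω : Fin m → Batch n b) (t : ℕ) : Vec d := (sarahState f w0 η b (pad ω) t).1

def sarahEstimate (ω : Fin m → Batch n b) (t : ℕ) : Vec d := (sarahState f w0 η b (pad ω) t).2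

lemma sarahIterate_zero (ω : Fin m → Batch n b) : sarahIterate f w0 η ω 0 = w0 := rfl

lemma sarahEstimate_zero (ω : Fin m → Batch n b) :
    sarahEstimate f w0 η ω 0 = meanGradient f w0 := rfl

lemma sarahIterate_succ (ω : Fin m → Batch n b) (t : ℕ) :
    sarahIterate f w0 η ω (t + 1) = sarahIterate f w0 η ω t - η • sarahEstimate f w0 η ω t :=
  rfl

lemma sarahEstimate_succ (ω : Fin m → Batch n b) {t : ℕ} (ht : t + 1 < m) :
    sarahEstimate f w0 η ω (t + 1)
      = (b : ℝ)⁻¹ • ∑ i ∈ (ω ⟨t + 1, ht⟩).1, (gradient (f i) (sarahIterate f w0 η ω (t + 1))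
          - gradient (f i) (sarahIterate f w0 η ω t)) + sarahEstimate f w0 η ω t := by
  simp only [sarahEstimate, sarahIterate, sarahState, pad, dif_pos ht]

lemma sarahState_congr {I J : ℕ → Finset (Fin n)} {t : ℕ}
    (h : ∀ k, 1 ≤ k → k ≤ t → I k = J k) :
    sarahState f w0 η b I t = sarahState f w0 η b J t := by
  induction t with
  | zero => rfl
  | succ t ih =>
    simp only [sarahState, ih fun k hk hkt => h k hk (by omega), h (t + 1) (by omega) le_rfl]

lemma sarahState_pad_update (ω : Fin m → Batch n b) {j : Fin m} (s : Batch n b) {t : ℕ}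
    (ht : t < j) :
    sarahState f w0 η b (pad (update ω j s)) t = sarahState f w0 η b (pad ω) t := by
  refine sarahState_congr f w0 η fun k _ hkt => ?_
  simp only [pad]
  split_ifs with hk
  · rw [update_of_ne (by rw [ne_eq, Fin.ext_iff, Fin.val_mk]; omega)]
  · rfl

lemma sarahIterate_update (ω : Fin m → Batch n b) {j : Fin m} (s : Batch n b) {t : ℕ}
    (ht : t ≤ j) : sarahIterate f w0 η (update ω j s) t = sarahIterate f w0 η ω t := by
  obtain _ | t := t
  · rfl
  rw [sarahIterate_succ, sarahIterate_succ]
  simp only [sarahIterate, sarahEstimate, sarahState_pad_update f w0 η ω s (show t < j by omega)]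

lemma sarahEstimate_update (ω : Fin m → Batch n b) {j : Fin m} (s : Batch n b) {t : ℕ}
    (ht : t < j) : sarahEstimate f w0 η (update ω j s) t = sarahEstimate f w0 η ω t := by
  simp only [sarahEstimate, sarahState_pad_update f w0 η ω s ht]

variable {f w0 η}

lemma expec_norm_sq_meanGradient_sub_sarahEstimate_succ_le (hn : 2 ≤ n) (hb : 1 ≤ b)
    (hbn : b ≤ n) {L : ℝ}
    (hsmooth : ∀ i x y, ‖gradient (f i) x - gradient (f i) y‖ ≤ L * ‖x - y‖) {t : ℕ}
    (ht : t + 1 < m) :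
    expec (fun ω : Fin m → Batch n b =>
        ‖meanGradient f (sarahIterate f w0 η ω (t + 1)) - sarahEstimate f w0 η ω (t + 1)‖ ^ 2)
      ≤ expec (fun ω : Fin m → Batch n b =>
          ‖meanGradient f (sarahIterate f w0 η ω t) - sarahEstimate f w0 η ω t‖ ^ 2)
        + (n - b) / (b * (n - 1)) * (L * η) ^ 2
          * expec (fun ω : Fin m → Batch n b => ‖sarahEstimate f w0 η ω t‖ ^ 2) := by
  set j : Fin m := ⟨t + 1, ht⟩
  set e : (Fin m → Batch n b) → Vec d :=
    fun ω => meanGradient f (sarahIterate f w0 η ω t) - sarahEstimate f w0 η ω t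
  set δ : (Fin m → Batch n b) → Fin n → Vec d := fun ω i =>
    gradient (f i) (sarahIterate f w0 η ω (t + 1)) - gradient (f i) (sarahIterate f w0 η ω t)
  set y : (Fin m → Batch n b) → Fin n → Vec d := fun ω i => δ ω i - (n : ℝ)⁻¹ • ∑ k, δ ω k
  set κ : ℝ := (n - b) / (b * (n - 1))
  have hdecomp : ∀ ω, meanGradient f (sarahIterate f w0 η ω (t + 1))
      - sarahEstimate f w0 η ω (t + 1) = e ω - (b : ℝ)⁻¹ • ∑ i ∈ (ω j).1, y ω i := by
    intro ω
    rw [Batch.smul_sum_mem_sub _ (by omega), sarahEstimate_succ _ _ _ _ ht]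
    simp only [e, δ, meanGradient, sum_sub_distrib, smul_sub]
    abel
  have hupdate : ∀ ω s, e (update ω j s) = e ω ∧ y (update ω j s) = y ω := fun ω s => by
    simp only [e, y, δ, sarahIterate_update _ _ _ ω s (show t ≤ j by simp [j]),
      sarahIterate_update _ _ _ ω s (show t + 1 ≤ j by simp [j]),
      sarahEstimate_update _ _ _ ω s (show t < j by simp [j]), and_self]
  have hvar : ∀ ω, (n : ℝ)⁻¹ * ∑ i, ‖y ω i‖ ^ 2 ≤ (L * η) ^ 2 * ‖sarahEstimate f w0 η ω t‖ ^ 2 := by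
    intro ω
    have hδ : ∀ i, ‖δ ω i‖ ≤ L * |η| * ‖sarahEstimate f w0 η ω t‖ := fun i => by
      simpa [δ, sarahIterate_succ, norm_smul, mul_assoc] using
        hsmooth i (sarahIterate f w0 η ω (t + 1)) (sarahIterate f w0 η ω t)
    simpa [mul_pow] using inv_mul_sum_norm_sub_mean_sq_le hδ
  calc _ = expec (fun ω => expec (fun s : Batch n b =>
          ‖e ω - (b : ℝ)⁻¹ • ∑ i ∈ s.1, y ω i‖ ^ 2)) := by
        simp only [hdecomp]
        exact expec_eval_eq_expec_expec j (fun ω s => ‖e ω - (b : ℝ)⁻¹ • ∑ i ∈ s.1, y ω i‖ ^ 2)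
          fun ω s s' => by rw [(hupdate ω s').1, (hupdate ω s').2]
    _ = expec (fun ω => ‖e ω‖ ^ 2 + κ * ((n : ℝ)⁻¹ * ∑ i, ‖y ω i‖ ^ 2)) :=
        congrArg expec <| funext fun ω =>
          Batch.expec_norm_sub_smul_sum_mem_sq hn hbn _ (sum_sub_mean_eq_zero (by omega) _)
    _ ≤ expec (fun ω => ‖e ω‖ ^ 2 + κ * ((L * η) ^ 2 * ‖sarahEstimate f w0 η ω t‖ ^ 2)) :=
        expec_mono fun ω => add_le_add le_rfl
          (mul_le_mul_of_nonneg_left (hvar ω) (sub_div_mul_sub_one_nonneg (by omega) hbn))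
    _ = _ := by rw [expec_add, expec_const_mul, expec_const_mul, ← mul_assoc]

theorem sum_expec_norm_sq_gradient_sarahIterate_le (hn : 2 ≤ n) (hb : 1 ≤ b) (hbn : b ≤ n)
    (hdiff : ∀ i, Differentiable ℝ (f i)) {L : ℝ}
    (hsmooth : ∀ i x y, ‖gradient (f i) x - gradient (f i) y‖ ≤ L * ‖x - y‖)
    {P : Vec d → ℝ} (hP : P = fun w => (n : ℝ)⁻¹ * ∑ i, f i w) {wstar : Vec d}
    (hmin : ∀ w, P wstar ≤ P w) (hη : 0 < η)
    (hstep : (n - b) / (b * (n - 1)) * (L * η) ^ 2 * (m - 1) ≤ 1 - L * η) :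
    ∑ t ∈ range m, expec (fun ω : Fin m → Batch n b => ‖gradient P (sarahIterate f w0 η ω t)‖ ^ 2)
      ≤ 2 / η * (P w0 - P wstar) := by
  have hgrad : gradient P = meanGradient f := hP ▸ gradient_inv_mul_sum hdiff
  have hPdiff : Differentiable ℝ P := hP ▸ by fun_prop
  have hlip : ∀ x y, ‖gradient P x - gradient P y‖ ≤ L * ‖x - y‖ :=
    hgrad ▸ norm_meanGradient_sub_le (by omega) hsmooth
  have := Batch.nonempty_of_le hbn
  set value : ℕ → ℝ := fun t => expec (fun ω : Fin m → Batch n b => P (sarahIterate f w0 η ω t))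
  set gradSq : ℕ → ℝ := fun t =>
    expec (fun ω : Fin m → Batch n b => ‖gradient P (sarahIterate f w0 η ω t)‖ ^ 2)
  set estSq : ℕ → ℝ := fun t =>
    expec (fun ω : Fin m → Batch n b => ‖sarahEstimate f w0 η ω t‖ ^ 2)
  set errSq : ℕ → ℝ := fun t => expec (fun ω : Fin m → Batch n b =>
    ‖gradient P (sarahIterate f w0 η ω t) - sarahEstimate f w0 η ω t‖ ^ 2)
  have hdesc : ∀ t, value (t + 1)
      ≤ value t - η / 2 * gradSq t - (1 - L * η) * (η / 2 * estSq t) + η / 2 * errSq t :=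
    fun t => expec_apply_sub_smul_le hPdiff hlip η (sarahIterate f w0 η · t)
      (sarahEstimate f w0 η · t)
  have herr : ∀ t, t + 1 < m → η / 2 * errSq (t + 1)
      ≤ η / 2 * errSq t + (n - b) / (b * (n - 1)) * (L * η) ^ 2 * (η / 2 * estSq t) := by
    intro t ht
    have h := expec_norm_sq_meanGradient_sub_sarahEstimate_succ_le (w0 := w0) (η := η) hn hb hbn
      hsmooth ht
    rw [← hgrad] at h
    calc η / 2 * errSq (t + 1)
        ≤ η / 2 * (errSq t + (n - b) / (b * (n - 1)) * (L * η) ^ 2 * estSq t) :=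
          mul_le_mul_of_nonneg_left h (by positivity)
      _ = _ := by ring
  have key := sum_range_le_of_descent (A := fun t => η / 2 * gradSq t)
    (B := fun t => η / 2 * estSq t) (C := fun t => η / 2 * errSq t) hdesc
    (mul_nonneg (sub_div_mul_sub_one_nonneg (by omega) hbn) (sq_nonneg _))
    (fun t => mul_nonneg (by positivity) (expec_nonneg fun ω => sq_nonneg _))
    (by simp [errSq, hgrad, sarahIterate_zero, sarahEstimate_zero, expec]) herr hstep
    ((expec_const (P wstar)).symm.le.trans (expec_mono fun ω => hmin _))
  simp only [value, sarahIterate_zero, expec_const, ← mul_sum] at key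
  calc ∑ t ∈ range m, gradSq t = 2 / η * (η / 2 * ∑ t ∈ range m, gradSq t) := by
        field_simp
    _ ≤ 2 / η * (P w0 - P wstar) := by gcongr

end Sarah

lemma sub_one_mul_sq_two_div_sqrt_add_one {r : ℝ} (hr : 3 ≤ 4 * r) :
    (r - 1) * (2 / (√(4 * r - 3) + 1)) ^ 2 = 1 - 2 / (√(4 * r - 3) + 1) := by
  have hs := Real.sq_sqrt (show 0 ≤ 4 * r - 3 by linarith)
  set s := √(4 * r - 3)
  have hpos : 0 < s + 1 := by positivity
  field_simp
  linear_combination -hs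

/-- **Corollary 4 of SARAH (nonconvex).** One inner loop of SARAH with `m = n − 1`
iterations, learning rate `η = 2/(L(√(4(n/b) − 3) + 1))`, and output chosen uniformly
among `w_0,…,w_{n−1}` satisfies
`E‖∇P(w̃)‖² ≤ L(√(4(n/b) − 3) + 1)/n·(P(w₀) − P(w⋆))`. -/
theorem sarah_in_convergence_m_eq_n_sub_one
    {d n : ℕ} (hn : 2 ≤ n)
    (f : Fin n → Vec d → ℝ) (L : ℝ) (hL : 0 < L)
    (hdiff : ∀ i, Differentiable ℝ (f i))
    (hsmooth : ∀ i (w w' : Vec d),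
      ‖gradient (f i) w - gradient (f i) w'‖ ≤ L * ‖w - w'‖)
    (P : Vec d → ℝ) (hP : P = fun w => (n : ℝ)⁻¹ * ∑ i, f i w)
    (wstar : Vec d) (hmin : ∀ w, P wstar ≤ P w)
    (w0 : Vec d) (η : ℝ) (b : ℕ) (hb : 1 ≤ b) (hbn : b ≤ n)
    (hηdef : η = 2 / (L * (Real.sqrt (4 * ((n : ℝ) / (b : ℝ)) - 3) + 1))) :
    expec (fun p : (Fin n → Batch n b) × Fin n =>
        ‖gradient P ((sarahState f w0 η b (pad p.1) (p.2 : ℕ)).1)‖ ^ 2)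
      ≤ L * (Real.sqrt (4 * ((n : ℝ) / (b : ℝ)) - 3) + 1) / (n : ℝ)
          * (P w0 - P wstar) := by
  have hb0 : (0 : ℝ) < b := by exact_mod_cast hb
  have hnb : 3 ≤ 4 * ((n : ℝ) / b) := by
    have : (1 : ℝ) ≤ n / b := (one_le_div hb0).2 (by exact_mod_cast hbn)
    linarith
  have hη : 0 < η := by
    rw [hηdef]
    positivity
  have hLη : L * η = 2 / (√(4 * ((n : ℝ) / b) - 3) + 1) := by
    rw [hηdef]
    field_simp
  have hstep : (n - b) / (b * (n - 1)) * (L * η) ^ 2 * (n - 1) ≤ 1 - L * η := by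
    have hn1 : (n : ℝ) - 1 ≠ 0 := by
      have : (2 : ℝ) ≤ n := by exact_mod_cast hn
      linarith
    rw [hLη, ← sub_one_mul_sq_two_div_sqrt_add_one hnb]
    apply le_of_eq
    field_simp
  have key := sum_expec_norm_sq_gradient_sarahIterate_le (m := n) (w0 := w0) hn hb hbn hdiff
    hsmooth hP hmin hη hstep
  calc expec (fun p : (Fin n → Batch n b) × Fin n =>
        ‖gradient P ((sarahState f w0 η b (pad p.1) (p.2 : ℕ)).1)‖ ^ 2)
      = (n : ℝ)⁻¹ * ∑ t ∈ range n,
          expec (fun ω : Fin n → Batch n b => ‖gradient P (sarahIterate f w0 η ω t)‖ ^ 2) :=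
        expec_prod_fin (fun ω t => ‖gradient P (sarahIterate f w0 η ω t)‖ ^ 2)
    _ ≤ (n : ℝ)⁻¹ * (2 / η * (P w0 - P wstar)) := by gcongr
    _ = _ := by
        rw [hηdef]
        field_simp
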